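/- Suppose the Brascamp–Lieb datum (B,c) is feasible and ∑_{j=1}^m c_j B_j^* B_j = I_n. Then ∏_{j=1}^m (det(B_j B_j^*))^{c_j} ≤ 1. -/

import Mathlib

open MeasureTheory ENNReal Matrix Filter Topology

noncomputable section

/-- The space of `m`-transformations: tuples of linear maps `ℝ^n → ℝ^{n_j}`,
represented as matrices. -/
abbrev MTrans (m n : ℕ) (nd : Fin m → ℕ) := ∀ j : Fin m, Matrix (Fin (nd j)) (Fin n) ℝ

/-- A valid input for the Brascamp–Lieb inequality: each `f j` is measurable and
has positive finite integral. -/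
def IsInput {m : ℕ} {nd : Fin m → ℕ} (f : ∀ j : Fin m, (Fin (nd j) → ℝ) → ℝ≥0∞) : Prop :=
  ∀ j, Measurable (f j) ∧ 0 < ∫⁻ y, f j y ∧ ∫⁻ y, f j y < ⊤

/-- The Brascamp–Lieb ratio `BL(B,c;f)`. -/
def BLratio {m n : ℕ} {nd : Fin m → ℕ} (B : MTrans m n nd) (c : Fin m → ℝ)
    (f : ∀ j : Fin m, (Fin (nd j) → ℝ) → ℝ≥0∞) : ℝ≥0∞ :=
  (∫⁻ x : Fin n → ℝ, ∏ j, f j (B j *ᵥ x) ^ c j) / ∏ j, (∫⁻ y, f j y) ^ c j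

/-- The Brascamp–Lieb constant `BL(B,c)`. -/
def BLconst {m n : ℕ} {nd : Fin m → ℕ} (B : MTrans m n nd) (c : Fin m → ℝ) : ℝ≥0∞ :=
  ⨆ (f : ∀ j : Fin m, (Fin (nd j) → ℝ) → ℝ≥0∞) (_ : IsInput f), BLratio B c f

/-- Membership in `F(c)`: finite BL constant and projection-normalised. -/
def MemF {m n : ℕ} {nd : Fin m → ℕ} (B : MTrans m n nd) (c : Fin m → ℝ) : Prop :=
  BLconst B c < ⊤ ∧ ∀ j, B j * (B j)ᵀ = 1

/-- Membership in `G(c)`: the datum `(B,c)` is geometric. -/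
def Geometric {m n : ℕ} {nd : Fin m → ℕ} (B : MTrans m n nd) (c : Fin m → ℝ) : Prop :=
  (∀ j, B j * (B j)ᵀ = 1) ∧ ∑ j, c j • ((B j)ᵀ * B j) = 1

/-- Equivalence of `m`-transformations: `B̃_j = T_j⁻¹ B_j T` for invertible `T, T_j`. -/
def EquivTrans {m n : ℕ} {nd : Fin m → ℕ} (B Bt : MTrans m n nd) : Prop :=
  ∃ (T : Matrix (Fin n) (Fin n) ℝ) (Tj : ∀ j, Matrix (Fin (nd j)) (Fin (nd j)) ℝ),
    IsUnit T ∧ (∀ j, IsUnit (Tj j)) ∧ ∀ j, Bt j = (Tj j)⁻¹ * B j * T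

/-- The square root of a positive semidefinite matrix, as `Matrix.PosSemidef.sqrt` was
defined in Mathlib (Dec 2024); removed from current Mathlib. -/
def Matrix.PosSemidef.sqrt {n 𝕜 : Type*} [Fintype n] [DecidableEq n] [RCLike 𝕜]
    [PartialOrder 𝕜] {A : Matrix n n 𝕜} (hA : A.PosSemidef) : Matrix n n 𝕜 :=
  hA.1.eigenvectorUnitary.1 * diagonal ((↑) ∘ (√·) ∘ hA.1.eigenvalues) *
  (star hA.1.eigenvectorUnitary : Matrix n n 𝕜)

open Classical in
/-- The map `φ`: `φ(B)_j = (B_j B_j^*)^{-1/2} B_j` (defined where `B_j B_j^*` is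
positive definite, and as `B_j` otherwise). -/
def phiMap {m n : ℕ} {nd : Fin m → ℕ} (B : MTrans m n nd) : MTrans m n nd := fun j =>
  if h : (B j * (B j)ᵀ).PosDef then (h.posSemidef.sqrt)⁻¹ * B j else B j

open Classical in
/-- The map `ψ`: `ψ(B)_j = B_j M^{-1/2}` with `M = ∑ c_j B_j^* B_j` (defined where `M`
is positive definite, and as `B_j` otherwise). -/
def psiMap {m n : ℕ} {nd : Fin m → ℕ} (c : Fin m → ℝ) (B : MTrans m n nd) : MTrans m n nd :=
  fun j =>
    if h : (∑ i, c i • ((B i)ᵀ * B i)).PosDef then B j * (h.posSemidef.sqrt)⁻¹ else B j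

/-- The BL scaling map `Φ = φ ∘ ψ`. -/
def PhiMap {m n : ℕ} {nd : Fin m → ℕ} (c : Fin m → ℝ) (B : MTrans m n nd) : MTrans m n nd :=
  phiMap (psiMap c B)

/-- The operator norm of a matrix, viewed as a linear map between Euclidean spaces. -/
def opNorm {a b : ℕ} (A : Matrix (Fin a) (Fin b) ℝ) : ℝ :=
  ‖LinearMap.toContinuousLinearMap (Matrix.toEuclideanLin A)‖

/-! For positive semidefinite `A = B_j B_jᵀ`, applying `λ ≤ exp (λ - 1)` to the eigenvalues gives
`det A ≤ exp (tr A - n_j)`, and the trace of `∑ c_j B_jᵀ B_j = 1` is `∑ c_j tr (B_j B_jᵀ) = n`, so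
the product is at most `exp (n - ∑ c_j n_j)`. Feasibility forces `n ≤ ∑ c_j n_j`: on the Gaussians
`y ↦ exp (-b |y|²)` the normalisation turns the integrand into `exp (-b |x|²)`, so the BL ratio is
`(π / b) ^ ((n - ∑ c_j n_j) / 2)`, which would be unbounded as `b → 0`. -/

open Real

theorem Matrix.PosSemidef.det_le_exp_trace_sub_card {ι : Type*} [Fintype ι] [DecidableEq ι]
    {A : Matrix ι ι ℝ} (hA : A.PosSemidef) : A.det ≤ exp (A.trace - Fintype.card ι) := by
  rw [hA.1.det_eq_prod_eigenvalues, hA.1.trace_eq_sum_eigenvalues]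
  simp only [RCLike.ofReal_real_eq_id, id]
  calc ∏ i, hA.1.eigenvalues i ≤ ∏ i, exp (hA.1.eigenvalues i - 1) :=
        Finset.prod_le_prod (fun i _ => hA.eigenvalues_nonneg i)
          fun i _ => by linarith [add_one_le_exp (hA.1.eigenvalues i - 1)]
    _ = exp (∑ i, hA.1.eigenvalues i - Fintype.card ι) := by
        rw [← exp_sum, Finset.sum_sub_distrib, Finset.sum_const, Finset.card_univ, nsmul_one]

theorem Matrix.prod_det_rpow_le_exp_sum {κ : Type*} [Fintype κ] {ι : κ → Type*}
    [∀ j, Fintype (ι j)] [∀ j, DecidableEq (ι j)] {A : ∀ j, Matrix (ι j) (ι j) ℝ}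
    (hA : ∀ j, (A j).PosSemidef) {c : κ → ℝ} (hc : ∀ j, 0 ≤ c j) :
    ∏ j, (A j).det ^ c j ≤ exp (∑ j, c j * ((A j).trace - Fintype.card (ι j))) := by
  rw [exp_sum]
  refine Finset.prod_le_prod (fun j _ => rpow_nonneg (hA j).det_nonneg _) fun j _ => ?_
  rw [mul_comm, exp_mul]
  exact rpow_le_rpow (hA j).det_nonneg (hA j).det_le_exp_trace_sub_card (hc j)

theorem Matrix.sum_mul_dotProduct_mulVec_self {κ ι : Type*} [Fintype κ] [Fintype ι]
    {μ : κ → Type*} [∀ j, Fintype (μ j)] (c : κ → ℝ) (B : ∀ j, Matrix (μ j) ι ℝ) (x : ι → ℝ) :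
    ∑ j, c j * (B j *ᵥ x) ⬝ᵥ (B j *ᵥ x) = x ⬝ᵥ (∑ j, c j • ((B j)ᵀ * B j)) *ᵥ x := by
  simp [Matrix.sum_mulVec, dotProduct_sum, smul_mulVec, dotProduct_smul, ← mulVec_mulVec,
    dotProduct_mulVec _ (B _)ᵀ, vecMul_transpose]

theorem lintegral_ofReal_exp_neg_mul_dotProduct_self (ι : Type*) [Fintype ι] {b : ℝ}
    (hb : 0 < b) :
    ∫⁻ y : ι → ℝ, ENNReal.ofReal (exp (-b * (y ⬝ᵥ y)))
      = ENNReal.ofReal ((π / b) ^ ((Fintype.card ι : ℝ) / 2)) := by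
  have hprod : ∀ y : ι → ℝ, exp (-b * (y ⬝ᵥ y)) = ∏ i, exp (-b * y i ^ 2) := by
    intro y
    rw [← exp_sum]
    simp [dotProduct, Finset.mul_sum, sq]
  have hint : Integrable fun y : ι → ℝ => ∏ i, exp (-b * y i ^ 2) :=
    Integrable.fintype_prod fun _ => integrable_exp_neg_mul_sq hb
  simp_rw [hprod]
  rw [← ofReal_integral_eq_lintegral_ofReal hint
    (ae_of_all _ fun y => Finset.prod_nonneg fun i _ => (exp_pos _).le),
    integral_fintype_prod_volume_eq_pow fun t => exp (-b * t ^ 2), integral_gaussian,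
    sqrt_eq_rpow, ← Real.rpow_natCast, ← rpow_mul (div_pos pi_pos hb).le]
  ring_nf

def gaussianInput {m : ℕ} (nd : Fin m → ℕ) (b : ℝ) : ∀ j : Fin m, (Fin (nd j) → ℝ) → ℝ≥0∞ :=
  fun _ y => ENNReal.ofReal (exp (-b * (y ⬝ᵥ y)))

section GaussianInput

variable {m n : ℕ} {nd : Fin m → ℕ} {b : ℝ}

theorem lintegral_gaussianInput (hb : 0 < b) (j : Fin m) :
    ∫⁻ y, gaussianInput nd b j y = ENNReal.ofReal ((π / b) ^ ((nd j : ℝ) / 2)) :=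
  (lintegral_ofReal_exp_neg_mul_dotProduct_self (Fin (nd j)) hb).trans
    (by rw [Fintype.card_fin])

theorem isInput_gaussianInput (hb : 0 < b) : IsInput (gaussianInput nd b) := fun j =>
  ⟨by unfold gaussianInput; fun_prop,
    by rw [lintegral_gaussianInput hb]; exact ENNReal.ofReal_pos.2 (by positivity),
    by rw [lintegral_gaussianInput hb]; exact ENNReal.ofReal_lt_top⟩

theorem BLratio_gaussianInput {B : MTrans m n nd} {c : Fin m → ℝ}
    (hiso : ∑ j, c j • ((B j)ᵀ * B j) = 1) (hb : 0 < b) :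
    BLratio B c (gaussianInput nd b)
      = ENNReal.ofReal ((π / b) ^ ((n - ∑ j, c j * nd j) / 2)) := by
  have hπb : 0 < π / b := div_pos pi_pos hb
  have hnum : ∀ x, ∏ j, gaussianInput nd b j (B j *ᵥ x) ^ c j
      = ENNReal.ofReal (exp (-b * (x ⬝ᵥ x))) := by
    intro x
    simp only [gaussianInput, ENNReal.ofReal_rpow_of_pos (exp_pos _), ← exp_mul,
      ← ENNReal.ofReal_prod_of_nonneg fun j _ => (exp_pos _).le, ← exp_sum]
    have hquad := sum_mul_dotProduct_mulVec_self c B x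
    rw [hiso, one_mulVec] at hquad
    rw [← hquad, Finset.mul_sum]
    congr 2
    exact Finset.sum_congr rfl fun j _ => by ring
  have hden : ∏ j, (∫⁻ y, gaussianInput nd b j y) ^ c j
      = ENNReal.ofReal ((π / b) ^ ((∑ j, c j * nd j) / 2)) := by
    simp only [lintegral_gaussianInput hb, ENNReal.ofReal_rpow_of_pos (rpow_pos_of_pos hπb _),
      ← rpow_mul hπb.le, ← ENNReal.ofReal_prod_of_nonneg fun j _ => (rpow_pos_of_pos hπb _).le,
      ← rpow_sum_of_pos hπb, Finset.sum_div]
    congr 2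
    exact Finset.sum_congr rfl fun j _ => by ring
  rw [BLratio, lintegral_congr hnum, lintegral_ofReal_exp_neg_mul_dotProduct_self _ hb, hden,
    ← ENNReal.ofReal_div_of_pos (rpow_pos_of_pos hπb _), ← rpow_sub hπb, sub_div,
    Fintype.card_fin]

end GaussianInput

theorem BLratio_le_BLconst {m n : ℕ} {nd : Fin m → ℕ} (B : MTrans m n nd) (c : Fin m → ℝ)
    {f : ∀ j : Fin m, (Fin (nd j) → ℝ) → ℝ≥0∞} (hf : IsInput f) :
    BLratio B c f ≤ BLconst B c :=
  le_iSup₂ (f := fun g (_ : IsInput g) => BLratio B c g) f hf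

theorem le_sum_mul_of_BLconst_lt_top {m n : ℕ} {nd : Fin m → ℕ} {B : MTrans m n nd}
    {c : Fin m → ℝ} (hB : BLconst B c < ⊤) (hiso : ∑ j, c j • ((B j)ᵀ * B j) = 1) :
    (n : ℝ) ≤ ∑ j, c j * nd j := by
  by_contra! hlt
  have he : 0 < (n - ∑ j, c j * nd j) / 2 := by linarith
  have hbound : ∀ R > 0, ENNReal.ofReal (R ^ ((n - ∑ j, c j * nd j) / 2)) ≤ BLconst B c := by
    intro R hR
    have hb : 0 < π / R := div_pos pi_pos hR
    simpa [BLratio_gaussianInput hiso hb, div_div_cancel₀ pi_ne_zero]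
      using BLratio_le_BLconst B c (isInput_gaussianInput (nd := nd) hb)
  exact hB.ne <| top_le_iff.1 <| le_of_tendsto
    (ENNReal.tendsto_ofReal_atTop.comp (tendsto_rpow_atTop he))
    ((eventually_gt_atTop (0 : ℝ)).mono hbound)

theorem prod_det_proj_le_one {m n : ℕ} {nd : Fin m → ℕ} (c : Fin m → ℝ)
    (hc : ∀ j, 0 < c j) (B : MTrans m n nd) (hB : BLconst B c < ⊤)
    (hiso : ∑ j, c j • ((B j)ᵀ * B j) = 1) :
    ∏ j, (B j * (B j)ᵀ).det ^ c j ≤ 1 := by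
  have hpsd : ∀ j, (B j * (B j)ᵀ).PosSemidef := fun j => by
    simpa using posSemidef_self_mul_conjTranspose (B j)
  have htrace : ∑ j, c j * (B j * (B j)ᵀ).trace = n := by
    simpa [trace_sum, trace_mul_comm (B _)] using congrArg trace hiso
  calc ∏ j, (B j * (B j)ᵀ).det ^ c j
      ≤ exp (∑ j, c j * ((B j * (B j)ᵀ).trace - Fintype.card (Fin (nd j)))) :=
        prod_det_rpow_le_exp_sum hpsd fun j => (hc j).le
    _ = exp (n - ∑ j, c j * nd j) := by
        simp only [mul_sub, Finset.sum_sub_distrib, htrace, Fintype.card_fin]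
    _ ≤ 1 := exp_le_one_iff.2 (sub_nonpos.2 (le_sum_mul_of_BLconst_lt_top hB hiso))
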